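/- arXiv:2106.14848 — 6 statements merged into one kernel-verified Lean document; each statement's English description precedes it below -/
import Mathlib

section
/- For every finite simple connected graph G with at least 2 vertices and every positive integer k, the distance-k domination number satisfies γ_k(G) ≤ dim_k(G) + 1. -/
open SimpleGraph Finset

/-- `D` is a distance-`k` dominating set of `G`: every vertex outside `D` is within
distance `k` of some vertex of `D`. -/
def IsKDomSet {V : Type*} (G : SimpleGraph V) (k : ℕ) (D : Finset V) : Prop :=
  ∀ u : V, u ∉ D → ∃ w ∈ D, G.dist u w ≤ k

/-- `R` is a distance-`k` resolving set of `G`: any two distinct vertices are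
distinguished by the truncated distance `d_k(x,y) = min (d(x,y)) (k+1)` to some vertex of `R`. -/
def IsKResSet {V : Type*} (G : SimpleGraph V) (k : ℕ) (R : Finset V) : Prop :=
  ∀ x y : V, x ≠ y → ∃ z ∈ R, min (G.dist x z) (k + 1) ≠ min (G.dist y z) (k + 1)

/-- The distance-`k` domination number `γ_k(G)`. -/
noncomputable def kdom {V : Type*} (G : SimpleGraph V) (k : ℕ) : ℕ :=
  sInf {m : ℕ | ∃ D : Finset V, IsKDomSet G k D ∧ D.card = m}

/-- The distance-`k` dimension `dim_k(G)`. -/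
noncomputable def kdim {V : Type*} (G : SimpleGraph V) (k : ℕ) : ℕ :=
  sInf {m : ℕ | ∃ R : Finset V, IsKResSet G k R ∧ R.card = m}

/-- The distance-`k` location-domination number `γ_L^k(G)`. -/
noncomputable def kld {V : Type*} (G : SimpleGraph V) (k : ℕ) : ℕ :=
  sInf {m : ℕ | ∃ S : Finset V, IsKDomSet G k S ∧ IsKResSet G k S ∧ S.card = m}

/-!
A distance-`k` resolving set `R` leaves at most one vertex at distance more than `k` from all
of `R`: two such vertices have truncated distance `k + 1` to every vertex of `R`, so `R` cannot
tell them apart. Adding that vertex (if any) to `R` gives a distance-`k` dominating set.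
-/

section

variable {V : Type*} {G : SimpleGraph V} {k : ℕ}

theorem kdom_le_card {D : Finset V} (hD : IsKDomSet G k D) : kdom G k ≤ #D :=
  Nat.sInf_le ⟨D, hD, rfl⟩

theorem isKResSet_univ [Fintype V] (hG : G.Connected) : IsKResSet G k univ := by
  intro x y hxy
  refine ⟨x, mem_univ x, ?_⟩
  have hyx : 0 < G.dist y x := hG.pos_dist_of_ne hxy.symm
  rw [dist_self]
  omega

theorem exists_isKResSet_card_eq_kdim [Fintype V] (hG : G.Connected) :
    ∃ R : Finset V, IsKResSet G k R ∧ #R = kdim G k :=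
  Nat.sInf_mem (s := {m | ∃ R : Finset V, IsKResSet G k R ∧ #R = m})
    ⟨_, univ, isKResSet_univ hG, rfl⟩

namespace IsKResSet

variable {R : Finset V}

theorem eq_of_forall_lt_dist (hR : IsKResSet G k R) {u v : V}
    (hu : ∀ z ∈ R, k < G.dist u z) (hv : ∀ z ∈ R, k < G.dist v z) : u = v := by
  by_contra huv
  obtain ⟨z, hz, hne⟩ := hR u v huv
  have := hu z hz
  have := hv z hz
  omega

theorem exists_isKDomSet_card_le (hR : IsKResSet G k R) :
    ∃ D : Finset V, IsKDomSet G k D ∧ #D ≤ #R + 1 := by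
  classical
  by_cases hdom : IsKDomSet G k R
  · exact ⟨R, hdom, Nat.le_succ _⟩
  simp only [IsKDomSet, not_forall, not_exists, not_and, not_le] at hdom
  obtain ⟨u, -, hu⟩ := hdom
  refine ⟨insert u R, fun v hv => ?_, card_insert_le u R⟩
  have hvu : v ≠ u := fun h => hv (h ▸ mem_insert_self u R)
  have hnear : ∃ z ∈ R, G.dist v z ≤ k := by
    by_contra! hfar
    exact hvu (hR.eq_of_forall_lt_dist hfar hu)
  obtain ⟨z, hz, hvz⟩ := hnear
  exact ⟨z, mem_insert_of_mem hz, hvz⟩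

end IsKResSet

end

theorem stmt_0_general {V : Type*} [Fintype V] (G : SimpleGraph V) (hG : G.Connected)
    (k : ℕ) :
    kdom G k ≤ kdim G k + 1 := by
  obtain ⟨R, hR, hRcard⟩ := exists_isKResSet_card_eq_kdim (k := k) hG
  obtain ⟨D, hD, hDcard⟩ := hR.exists_isKDomSet_card_le
  calc kdom G k ≤ #D := kdom_le_card hD
    _ ≤ #R + 1 := hDcard
    _ = kdim G k + 1 := by rw [hRcard]

/-- For every finite simple connected graph `G` with at least 2 vertices and every
positive integer `k`, `γ_k(G) ≤ dim_k(G) + 1`. -/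
theorem stmt_0 {V : Type*} [Fintype V] (G : SimpleGraph V) (hG : G.Connected)
    (hn : 2 ≤ Fintype.card V) (k : ℕ) (hk : 1 ≤ k) :
    kdom G k ≤ kdim G k + 1 :=
  stmt_0_general G hG k
end

section
/- For every finite simple connected graph G of order n ≥ 2 and every positive integer k, γ_L^k(G) = 1 if and only if G is isomorphic to the path P_i for some i with 2 ≤ i ≤ k + 1. -/
/-!
A single vertex `z` is a distance-`k` locating-dominating set exactly when all distances
`d(·, z)` are at most `k` and pairwise distinct. In a connected graph a vertex at distance
`d + 1` from `z` has a neighbour at distance `d`, which by injectivity is the only vertex at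
that distance; so adjacency means "distances to `z` differ by one" and ordering the vertices
by their distance to `z` is an isomorphism onto `P_n`, with `n ≤ k + 1`. Conversely an end
vertex of `P_i`, `i ≤ k + 1`, has this property.
-/

open SimpleGraph Finset

namespace SimpleGraph

variable {V W : Type*} {G : SimpleGraph V} {G' : SimpleGraph W}

theorem Hom.edist_map_le (f : G →g G') (u v : V) : G'.edist (f u) (f v) ≤ G.edist u v := by
  by_cases h : G.Reachable u v
  · obtain ⟨p, hp⟩ := h.exists_walk_length_eq_edist
    calc G'.edist (f u) (f v) ≤ (p.map f).length := edist_le _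
      _ = G.edist u v := by rw [Walk.length_map, hp]
  · rw [edist_eq_top_of_not_reachable h]
    exact le_top

theorem Iso.edist_map (φ : G ≃g G') (u v : V) : G'.edist (φ u) (φ v) = G.edist u v :=
  le_antisymm (Hom.edist_map_le φ.toHom u v) <| by
    simpa using Hom.edist_map_le φ.symm.toHom (φ u) (φ v)

theorem Iso.dist_map (φ : G ≃g G') (u v : V) : G'.dist (φ u) (φ v) = G.dist u v := by
  simp only [dist, Iso.edist_map]

theorem exists_adj_dist_eq_of_dist_eq_succ {v z : V} {d : ℕ} (h : G.dist v z = d + 1) :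
    ∃ w, G.Adj v w ∧ G.dist w z = d := by
  obtain ⟨p, hp⟩ := exists_walk_of_dist_ne_zero (by omega : G.dist v z ≠ 0)
  cases p with
  | nil => simp at h
  | @cons _ w _ hadj q =>
    refine ⟨w, hadj, ?_⟩
    have hle : G.dist w z ≤ d := by
      have := dist_le q
      simp only [Walk.length_cons] at hp
      omega
    have hge : G.dist v z ≤ G.dist v w + G.dist w z := q.reachable.dist_triangle_right v
    rw [dist_eq_one_iff_adj.mpr hadj] at hge
    omega

theorem adj_iff_dist_succ_of_injective {z : V} (hinj : Function.Injective (G.dist · z))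
    {a b : V} : G.Adj a b ↔ G.dist a z + 1 = G.dist b z ∨ G.dist b z + 1 = G.dist a z := by
  constructor
  · intro hadj
    have hne : G.dist a z ≠ G.dist b z := fun h ↦ hadj.ne (hinj h)
    have := hadj.diff_dist_adj (u := z)
    rw [dist_comm (u := z), dist_comm (u := z)] at this
    omega
  · rintro (hab | hba)
    · obtain ⟨w, hadj, hw⟩ := exists_adj_dist_eq_of_dist_eq_succ hab.symm
      exact hinj hw ▸ hadj.symm
    · obtain ⟨w, hadj, hw⟩ := exists_adj_dist_eq_of_dist_eq_succ hba.symm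
      exact hinj hw ▸ hadj

theorem Connected.nonempty_iso_pathGraph_of_injective_dist [Fintype V] (hG : G.Connected)
    {z : V} (hinj : Function.Injective (G.dist · z)) :
    Nonempty (G ≃g pathGraph (Fintype.card V)) := by
  have hlt (v : V) : G.dist v z < Fintype.card V := by
    obtain ⟨p, hpath, hlen⟩ := hG.exists_path_of_dist v z
    exact hlen ▸ hpath.length_lt
  let f : V → Fin (Fintype.card V) := fun v ↦ ⟨G.dist v z, hlt v⟩
  have hf : Function.Bijective f := by
    rw [Fintype.bijective_iff_injective_and_card]
    exact ⟨fun x y hxy ↦ hinj (Fin.val_eq_of_eq hxy), Fintype.card_fin _ |>.symm⟩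
  exact ⟨⟨Equiv.ofBijective f hf, by
    simp [f, pathGraph_adj, adj_iff_dist_succ_of_injective hinj]⟩⟩

theorem pathGraph_exists_walk_of_add_eq {n : ℕ} (m : ℕ) :
    ∀ a b : Fin n, (a : ℕ) + m = b → ∃ p : (pathGraph n).Walk a b, p.length = m := by
  induction m with
  | zero =>
    intro a b h
    obtain rfl : a = b := Fin.ext (by omega)
    exact ⟨Walk.nil, rfl⟩
  | succ m ih =>
    intro a b h
    obtain ⟨p, hp⟩ := ih ⟨a + 1, by omega⟩ b (by simp only; omega)
    exact ⟨Walk.cons (pathGraph_adj.mpr (Or.inl rfl)) p, by simp [hp]⟩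

theorem pathGraph_sub_add_sub_le_length {n : ℕ} {a b : Fin n} (p : (pathGraph n).Walk a b) :
    (a : ℕ) - b + (b - a) ≤ p.length := by
  induction p with
  | nil => simp
  | cons h q ih =>
    have := pathGraph_adj.mp h
    simp only [Walk.length_cons]
    omega

theorem pathGraph_dist {n : ℕ} (a b : Fin n) :
    (pathGraph n).dist a b = (a : ℕ) - b + (b - a) := by
  wlog hab : a ≤ b generalizing a b
  · rw [dist_comm, this b a (le_of_not_ge hab)]
    omega
  obtain ⟨p, hp⟩ := pathGraph_exists_walk_of_add_eq (b - a : ℕ) a b (by omega)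
  obtain ⟨q, hq⟩ := (pathGraph_preconnected n a b).exists_walk_length_eq_dist
  have := pathGraph_sub_add_sub_le_length q
  have := dist_le p
  omega

end SimpleGraph

section LocatingDomination

variable {V : Type*} {G : SimpleGraph V} {k : ℕ}

theorem isKDomSet_singleton_iff {z : V} : IsKDomSet G k {z} ↔ ∀ u, G.dist u z ≤ k := by
  refine ⟨fun h u ↦ ?_, fun h u _ ↦ ⟨z, mem_singleton_self z, h u⟩⟩
  by_cases hu : u = z
  · simp [hu]
  · obtain ⟨w, hw, hle⟩ := h u (by simpa using hu)
    exact mem_singleton.mp hw ▸ hle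

theorem isKResSet_singleton_iff_of_forall_dist_le {z : V} (hle : ∀ u, G.dist u z ≤ k) :
    IsKResSet G k {z} ↔ Function.Injective (G.dist · z) := by
  have hmin (u : V) : min (G.dist u z) (k + 1) = G.dist u z :=
    min_eq_left (Nat.le_succ_of_le (hle u))
  simp only [IsKResSet, mem_singleton, exists_eq_left, hmin, Function.Injective]
  exact forall₂_congr fun x y ↦ not_imp_not

theorem not_isKResSet_empty [Nontrivial V] : ¬ IsKResSet G k ∅ := by
  obtain ⟨x, y, hxy⟩ := exists_pair_ne V
  simpa [IsKResSet] using ⟨x, y, hxy⟩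

theorem kld_eq_one_iff [Nontrivial V] :
    kld G k = 1 ↔ ∃ z, IsKDomSet G k {z} ∧ IsKResSet G k {z} := by
  set s := {m : ℕ | ∃ S : Finset V, IsKDomSet G k S ∧ IsKResSet G k S ∧ S.card = m}
  have hzero : 0 ∉ s := by
    rintro ⟨S, -, hres, hcard⟩
    exact not_isKResSet_empty (card_eq_zero.mp hcard ▸ hres)
  have hone : 1 ∈ s ↔ ∃ z, IsKDomSet G k {z} ∧ IsKResSet G k {z} := by
    simp only [s, Set.mem_ofPred_eq, card_eq_one]
    constructor
    · rintro ⟨S, hdom, hres, z, rfl⟩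
      exact ⟨z, hdom, hres⟩
    · rintro ⟨z, hdom, hres⟩
      exact ⟨{z}, hdom, hres, z, rfl⟩
  rw [← hone]
  refine ⟨fun h ↦ h ▸ Nat.sInf_mem (Nat.nonempty_of_sInf_eq_succ h), fun h ↦ ?_⟩
  refine le_antisymm (Nat.sInf_le h) (Nat.one_le_iff_ne_zero.mpr fun h0 ↦ ?_)
  exact (Nat.sInf_eq_zero.mp h0).elim hzero (Set.nonempty_iff_ne_empty.mp ⟨1, h⟩)

theorem kld_eq_one_iff_exists_injective_dist [Nontrivial V] :
    kld G k = 1 ↔ ∃ z, (∀ u, G.dist u z ≤ k) ∧ Function.Injective (G.dist · z) := by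
  rw [kld_eq_one_iff]
  refine exists_congr fun z ↦ ?_
  rw [isKDomSet_singleton_iff]
  exact and_congr_right isKResSet_singleton_iff_of_forall_dist_le

end LocatingDomination

theorem stmt_5_general {V : Type*} [Fintype V] (G : SimpleGraph V) (hG : G.Connected)
    (hn : 2 ≤ Fintype.card V) (k : ℕ) :
    kld G k = 1 ↔ ∃ i : ℕ, 2 ≤ i ∧ i ≤ k + 1 ∧ Nonempty (G ≃g pathGraph i) := by
  have : Nontrivial V := Fintype.one_lt_card_iff_nontrivial.mp hn
  rw [kld_eq_one_iff_exists_injective_dist]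
  constructor
  · rintro ⟨z, hle, hinj⟩
    have hcard : Fintype.card V ≤ k + 1 := by
      simpa using Fintype.card_le_of_injective
        (fun v ↦ (⟨G.dist v z, Nat.lt_succ_of_le (hle v)⟩ : Fin (k + 1)))
        fun x y hxy ↦ hinj (Fin.val_eq_of_eq hxy)
    exact ⟨_, hn, hcard, hG.nonempty_iso_pathGraph_of_injective_dist hinj⟩
  · rintro ⟨i, hi, hik, ⟨φ⟩⟩
    have hdist (u : V) : G.dist u (φ.symm ⟨0, by omega⟩) = φ u := by
      rw [← φ.dist_map, φ.apply_symm_apply, pathGraph_dist]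
      simp
    refine ⟨φ.symm ⟨0, by omega⟩, fun u ↦ ?_, fun x y hxy ↦ ?_⟩
    · rw [hdist]
      omega
    · exact φ.injective (Fin.ext (by simpa only [hdist] using hxy))

/-- For every finite simple connected graph `G` of order `n ≥ 2` and positive integer `k`,
`γ_L^k(G) = 1` iff `G` is isomorphic to a path `P_i` with `2 ≤ i ≤ k + 1`. -/
theorem stmt_5 {V : Type*} [Fintype V] (G : SimpleGraph V) (hG : G.Connected)
    (hn : 2 ≤ Fintype.card V) (k : ℕ) (hk : 1 ≤ k) :
    kld G k = 1 ↔ ∃ i : ℕ, 2 ≤ i ∧ i ≤ k + 1 ∧ Nonempty (G ≃g pathGraph i) :=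
  stmt_5_general G hG hn k
end

section
/- For every finite simple connected graph G of order n ≥ 2 and every integer k ≥ 2, γ_L^k(G) = n − 1 if and only if G is isomorphic to the complete graph K_n. -/
open SimpleGraph Finset

/-!
The set of all vertices but one is always distance-`k` locating-dominating, so
`γ_L^k(G) ≤ n - 1`. In `K_n` all distances between distinct vertices equal `1`, so two vertices
outside a set are never told apart by it and equality holds. If a connected `G` is not
complete, it has an induced path `u - w - v`; as `d(u, v) = 2 ≤ k`, the vertex `v` dominates
`u` and `w` and separates them, so removing both `u` and `w` gives `γ_L^k(G) ≤ n - 2`.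
-/

namespace SimpleGraph

variable {V : Type*} {G : SimpleGraph V} {k : ℕ}

lemma kld_le_card {S : Finset V} (hdom : IsKDomSet G k S) (hres : IsKResSet G k S) :
    kld G k ≤ S.card :=
  Nat.sInf_le ⟨S, hdom, hres, rfl⟩

lemma Connected.isKResSet_of_forall_notMem (hG : G.Connected) {S : Finset V}
    (h : ∀ x y, x ∉ S → y ∉ S → x ≠ y →
      ∃ z ∈ S, min (G.dist x z) (k + 1) ≠ min (G.dist y z) (k + 1)) :
    IsKResSet G k S := by
  intro x y hxy
  by_cases hx : x ∈ S
  · refine ⟨x, hx, ?_⟩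
    have := hG.pos_dist_of_ne hxy.symm
    simp only [dist_self]
    omega
  by_cases hy : y ∈ S
  · refine ⟨y, hy, ?_⟩
    have := hG.pos_dist_of_ne hxy
    simp only [dist_self]
    omega
  exact h x y hx hy hxy

lemma Connected.exists_adj_adj_not_adj_ne (hG : G.Connected) (hne : G ≠ ⊤) :
    ∃ u w v : V, G.Adj u w ∧ G.Adj w v ∧ ¬G.Adj u v ∧ u ≠ v := by
  obtain ⟨a, b, hab, hnadj⟩ := ne_top_iff_exists_not_adj.mp hne
  obtain ⟨p, hp⟩ := hG.exists_walk_length_eq_dist a b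
  refine p.exists_adj_adj_not_adj_ne hp ?_
  have := hG.pos_dist_of_ne hab
  have : G.dist a b ≠ 1 := mt dist_eq_one_iff_adj.mp hnadj
  omega

section Fintype

variable [Fintype V]

lemma Connected.exists_card_eq_kld (hG : G.Connected) :
    ∃ S : Finset V, IsKDomSet G k S ∧ IsKResSet G k S ∧ S.card = kld G k := by
  have hdom : IsKDomSet G k univ := fun u hu ↦ absurd (mem_univ u) hu
  have hres : IsKResSet G k univ :=
    hG.isKResSet_of_forall_notMem fun x _ hx ↦ absurd (mem_univ x) hx
  exact Nat.sInf_mem (s := {m | ∃ S : Finset V, IsKDomSet G k S ∧ IsKResSet G k S ∧ S.card = m})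
    ⟨_, univ, hdom, hres, rfl⟩

lemma nonempty_iso_top_fin_iff :
    Nonempty (G ≃g (⊤ : SimpleGraph (Fin (Fintype.card V)))) ↔ G = ⊤ :=
  ⟨fun ⟨e⟩ ↦ eq_top_of_isIndContained_top e.isIndContained,
    fun h ↦ h ▸ ⟨Iso.completeGraph (Fintype.equivFin V)⟩⟩

variable [DecidableEq V]

lemma Connected.isKResSet_univ_erase (hG : G.Connected) (v : V) :
    IsKResSet G k (univ.erase v) :=
  hG.isKResSet_of_forall_notMem fun x y hx hy hxy ↦ by
    simp only [mem_erase, mem_univ, and_true, not_not] at hx hy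
    exact absurd (hx.trans hy.symm) hxy

lemma Connected.isKDomSet_univ_erase [Nontrivial V] (hG : G.Connected) (hk : 1 ≤ k) (v : V) :
    IsKDomSet G k (univ.erase v) := by
  intro u hu
  obtain rfl : u = v := by simpa using hu
  obtain ⟨w, huw⟩ := hG.preconnected.exists_adj_of_nontrivial u
  exact ⟨w, by simpa using huw.ne.symm, by rw [dist_eq_one_iff_adj.mpr huw]; exact hk⟩

lemma Connected.kld_le_card_sub_one (hG : G.Connected) (hn : 2 ≤ Fintype.card V)
    (hk : 1 ≤ k) : kld G k ≤ Fintype.card V - 1 := by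
  have : Nontrivial V := Fintype.one_lt_card_iff_nontrivial.mp hn
  obtain ⟨v⟩ := hG.nonempty
  calc kld G k ≤ (univ.erase v).card :=
        kld_le_card (hG.isKDomSet_univ_erase hk v) (hG.isKResSet_univ_erase v)
    _ = Fintype.card V - 1 := by rw [card_erase_of_mem (mem_univ v), card_univ]

lemma card_sub_one_le_card_of_isKResSet_top {S : Finset V}
    (hS : IsKResSet (⊤ : SimpleGraph V) k S) : Fintype.card V - 1 ≤ S.card := by
  by_contra! hlt
  have : 1 < (univ \ S).card := by
    rw [card_sdiff_of_subset (subset_univ S), card_univ]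
    omega
  obtain ⟨x, hx, y, hy, hxy⟩ := one_lt_card.mp this
  simp only [mem_sdiff, mem_univ, true_and] at hx hy
  obtain ⟨z, hz, hne⟩ := hS x y hxy
  have hxz : x ≠ z := fun h ↦ hx (h ▸ hz)
  have hyz : y ≠ z := fun h ↦ hy (h ▸ hz)
  rw [dist_top_of_ne hxz, dist_top_of_ne hyz] at hne
  exact hne rfl

lemma kld_top (hn : 2 ≤ Fintype.card V) (hk : 1 ≤ k) :
    kld (⊤ : SimpleGraph V) k = Fintype.card V - 1 := by
  have : Nonempty V := Fintype.card_pos_iff.mp (by omega)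
  obtain ⟨S, -, hres, hS⟩ := (connected_top (V := V)).exists_card_eq_kld (k := k)
  exact le_antisymm (connected_top.kld_le_card_sub_one hn hk)
    (hS ▸ card_sub_one_le_card_of_isKResSet_top hres)

lemma Connected.kld_le_card_sub_two_of_ne_top (hG : G.Connected) (hne : G ≠ ⊤) (hk : 2 ≤ k) :
    kld G k ≤ Fintype.card V - 2 := by
  obtain ⟨u, w, v, huw, hwv, hnuv, huv⟩ := hG.exists_adj_adj_not_adj_ne hne
  have hdwv : G.dist w v = 1 := dist_eq_one_iff_adj.mpr hwv
  have hduv : G.dist u v = 2 := by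
    have : G.dist u v ≤ 2 := by simpa using dist_le (Walk.cons huw hwv.toWalk)
    have := hG.pos_dist_of_ne huv
    have : G.dist u v ≠ 1 := mt dist_eq_one_iff_adj.mp hnuv
    omega
  set S := univ \ {u, w}
  have hvS : v ∈ S := by simp [S, huv.symm, hwv.ne.symm]
  have hcompl {x : V} (hx : x ∉ S) : x = u ∨ x = w := by
    simpa only [S, mem_sdiff, mem_univ, true_and, mem_insert, mem_singleton, not_not] using hx
  have hdom : IsKDomSet G k S := by
    intro x hx
    refine ⟨v, hvS, ?_⟩
    rcases hcompl hx with rfl | rfl <;> omega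
  have hres : IsKResSet G k S := by
    refine hG.isKResSet_of_forall_notMem fun x y hx hy hxy ↦ ⟨v, hvS, ?_⟩
    rcases hcompl hx with rfl | rfl <;> rcases hcompl hy with rfl | rfl <;>
      first | exact absurd rfl hxy | omega
  calc kld G k ≤ S.card := kld_le_card hdom hres
    _ = Fintype.card V - 2 := by
      rw [card_sdiff_of_subset (subset_univ _), card_univ, card_pair huw.ne]

end Fintype

end SimpleGraph

/-- For every finite simple connected graph `G` of order `n ≥ 2` and integer `k ≥ 2`,
`γ_L^k(G) = n - 1` iff `G` is isomorphic to the complete graph `K_n`. -/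
theorem stmt_7 {V : Type*} [Fintype V] (G : SimpleGraph V) (hG : G.Connected)
    (hn : 2 ≤ Fintype.card V) (k : ℕ) (hk : 2 ≤ k) :
    kld G k = Fintype.card V - 1 ↔
      Nonempty (G ≃g (⊤ : SimpleGraph (Fin (Fintype.card V)))) := by
  classical
  rw [nonempty_iso_top_fin_iff]
  constructor
  · intro h
    by_contra hne
    have := hG.kld_le_card_sub_two_of_ne_top hne hk
    omega
  · rintro rfl
    exact kld_top hn (by omega)
end

section
/- Let G be a finite simple connected graph of order n ≥ 2, let k be a positive integer, and suppose γ_L^k(G) = β. Then n ≤ (⌊2(k+1)/3⌋ + 1)^β − 1 + β · Σ_{i=1}^{⌈(k+1)/3⌉} (2i − 1)^{β−1}. -/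
open SimpleGraph Finset

/-!
Fix a distance-`k` locating-dominating set `S` with `|S| = β` and send every vertex `v` to its
vector of truncated distances `(d_k(v, z))_{z ∈ S}`; resolvability makes this injective, so it
suffices to count the possible vectors. Choose a threshold `r ≤ k + 1`. If some coordinate
`d_k(v, z)` equals `j < r`, then `d(v, z) = j` and, by the triangle inequality, every other
coordinate lies within `j` of the corresponding coordinate of `z`'s own vector: at most
`(2j + 1)^(β - 1)` vectors for each `z` and `j`. Otherwise all coordinates lie in `[r, k + 1]`,
and domination excludes the all-`(k + 1)` vector: at most `(k + 2 - r)^β - 1` vectors.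
The choice `r = ⌈(k + 1)/3⌉` gives the bound.
-/

section Counting

variable {ι : Type*} [Fintype ι] [DecidableEq ι]

def pinnedBox (c : ι → ℕ) (i : ι) (j : ℕ) : Finset (ι → ℕ) :=
  Fintype.piFinset fun i' => if i' = i then {j} else Icc (c i' - j) (c i' + j)

theorem card_pinnedBox_le (c : ι → ℕ) (i : ι) (j : ℕ) :
    #(pinnedBox c i j) ≤ (2 * j + 1) ^ (Fintype.card ι - 1) := by
  rw [pinnedBox, Fintype.card_piFinset, ← prod_erase_mul _ _ (mem_univ i), if_pos rfl,
    card_singleton, mul_one, ← card_univ, ← card_erase_of_mem (mem_univ i)]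
  refine prod_le_pow_card _ _ _ fun i' hi' => ?_
  rw [if_neg (ne_of_mem_erase hi'), Nat.card_Icc]
  omega

theorem card_piFinset_Icc_erase_const {r m : ℕ} (hrm : r ≤ m) :
    #((Fintype.piFinset fun _ : ι => Icc r m).erase fun _ => m) =
      (m + 1 - r) ^ Fintype.card ι - 1 := by
  rw [card_erase_of_mem (Fintype.mem_piFinset.mpr fun _ => mem_Icc.mpr ⟨hrm, le_rfl⟩),
    Fintype.card_piFinset, prod_const, Nat.card_Icc, card_univ]

end Counting

theorem sum_range_odd_pow_eq_sum_Icc (r p : ℕ) :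
    ∑ j ∈ range r, (2 * j + 1) ^ p = ∑ i ∈ Icc 1 r, (2 * i - 1) ^ p := by
  rw [← Finset.Ico_add_one_right_eq_Icc, sum_Ico_eq_sum_range, Nat.add_sub_cancel]
  exact sum_congr rfl fun j _ => by congr 1; omega

section TruncatedDistance

variable {V : Type*} {G : SimpleGraph V} {k : ℕ}

noncomputable def truncDistVec (G : SimpleGraph V) (k : ℕ) (S : Finset V) (v : V) : S → ℕ :=
  fun z => min (G.dist v z) (k + 1)

theorem SimpleGraph.Connected.min_dist_mem_Icc (hG : G.Connected) (u v w : V) (m : ℕ) :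
    min (G.dist v w) m ∈
      Icc (min (G.dist u w) m - G.dist u v) (min (G.dist u w) m + G.dist u v) := by
  have h₁ : G.dist v w ≤ G.dist v u + G.dist u w := hG.dist_triangle
  have h₂ : G.dist u w ≤ G.dist u v + G.dist v w := hG.dist_triangle
  have h₃ : G.dist v u = G.dist u v := dist_comm
  rw [mem_Icc]
  omega

theorem truncDistVec_injective {S : Finset V} (hS : IsKResSet G k S) :
    Function.Injective (truncDistVec G k S) := by
  intro x y hxy
  by_contra hne
  obtain ⟨z, hz, hzne⟩ := hS x y hne
  exact hzne (congrFun hxy ⟨z, hz⟩)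

theorem truncDistVec_ne_const {S : Finset V} (hS : IsKDomSet G k S) (v : V) :
    truncDistVec G k S v ≠ fun _ => k + 1 := by
  intro hv
  obtain ⟨z, hz, hvz⟩ : ∃ z ∈ S, G.dist v z ≤ k := by
    by_cases hvS : v ∈ S
    · exact ⟨v, hvS, by simp⟩
    · exact hS v hvS
  have := congrFun hv ⟨z, hz⟩
  simp only [truncDistVec] at this
  omega

variable [DecidableEq V]

theorem truncDistVec_mem_pinnedBox (hG : G.Connected) {S : Finset V} (v : V) (i : S)
    (hi : truncDistVec G k S v i ≤ k) :
    truncDistVec G k S v ∈ pinnedBox (truncDistVec G k S i) i (truncDistVec G k S v i) := by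
  have hvi : truncDistVec G k S v i = G.dist i v := by
    rw [dist_comm]
    exact min_eq_left (by simp only [truncDistVec] at hi; omega)
  refine Fintype.mem_piFinset.mpr fun i' => ?_
  split_ifs with h
  · simp [h]
  · rw [hvi]
    exact hG.min_dist_mem_Icc i v i' (k + 1)

theorem truncDistVec_mem_union (hG : G.Connected) {S : Finset V} (hS : IsKDomSet G k S)
    {r : ℕ} (hr : r ≤ k + 1) (v : V) :
    truncDistVec G k S v ∈ (Fintype.piFinset fun _ => Icc r (k + 1)).erase (fun _ => k + 1) ∪
      univ.biUnion fun i : S => (range r).biUnion (pinnedBox (truncDistVec G k S i) i) := by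
  by_cases hsmall : ∃ i, truncDistVec G k S v i < r
  · obtain ⟨i, hi⟩ := hsmall
    refine mem_union_right _ (mem_biUnion.mpr ⟨i, mem_univ i, mem_biUnion.mpr
      ⟨_, mem_range.mpr hi, truncDistVec_mem_pinnedBox hG v i (by omega)⟩⟩)
  · push Not at hsmall
    refine mem_union_left _ (mem_erase.mpr ⟨truncDistVec_ne_const hS v,
      Fintype.mem_piFinset.mpr fun i => mem_Icc.mpr ⟨hsmall i, min_le_right _ _⟩⟩)

theorem card_le_of_isKDomSet_of_isKResSet [Fintype V] (hG : G.Connected) {S : Finset V}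
    (hdom : IsKDomSet G k S) (hres : IsKResSet G k S) {r : ℕ} (hr : r ≤ k + 1) :
    Fintype.card V ≤ (k + 2 - r) ^ #S - 1 + #S * ∑ j ∈ range r, (2 * j + 1) ^ (#S - 1) := by
  calc Fintype.card V
      ≤ #((Fintype.piFinset fun _ => Icc r (k + 1)).erase (fun _ => k + 1) ∪
          univ.biUnion fun i : S => (range r).biUnion (pinnedBox (truncDistVec G k S i) i)) :=
        card_le_card_of_injOn _ (fun v _ => truncDistVec_mem_union hG hdom hr v)
          (truncDistVec_injective hres).injOn
    _ ≤ (k + 2 - r) ^ #S - 1 +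
          ∑ i : S, ∑ j ∈ range r, #(pinnedBox (truncDistVec G k S i) i j) := by
        refine (card_union_le _ _).trans (add_le_add ?_ ?_)
        · rw [card_piFinset_Icc_erase_const hr, Fintype.card_coe]
        · exact card_biUnion_le.trans (sum_le_sum fun i _ => card_biUnion_le)
    _ ≤ (k + 2 - r) ^ #S - 1 + #S * ∑ j ∈ range r, (2 * j + 1) ^ (#S - 1) := by
        rw [← Fintype.card_coe S, ← smul_eq_mul, ← card_univ, ← sum_const]
        gcongr with i _ j _
        exact card_pinnedBox_le _ _ _

end TruncatedDistance

theorem exists_isKDomSet_isKResSet_card_eq_kld {V : Type*} [Fintype V] {G : SimpleGraph V}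
    (hG : G.Connected) (k : ℕ) : ∃ S, IsKDomSet G k S ∧ IsKResSet G k S ∧ #S = kld G k := by
  have hne : {m | ∃ S : Finset V, IsKDomSet G k S ∧ IsKResSet G k S ∧ #S = m}.Nonempty := by
    refine ⟨_, univ, fun u hu => absurd (mem_univ u) hu,
      fun x y hxy => ⟨x, mem_univ x, ?_⟩, rfl⟩
    have := hG.pos_dist_of_ne hxy.symm
    simp only [dist_self]
    omega
  exact Nat.sInf_mem hne

theorem stmt_11_general {V : Type*} [Fintype V] (G : SimpleGraph V) (hG : G.Connected)
    (k : ℕ) (β : ℕ) (hβ : kld G k = β) :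
    Fintype.card V ≤ (2 * (k + 1) / 3 + 1) ^ β - 1 +
      β * ∑ i ∈ Finset.Icc 1 ((k + 1 + 2) / 3), (2 * i - 1) ^ (β - 1) := by
  classical
  obtain ⟨S, hdom, hres, hS⟩ := exists_isKDomSet_isKResSet_card_eq_kld hG k
  have key := card_le_of_isKDomSet_of_isKResSet hG hdom hres (r := (k + 1 + 2) / 3) (by omega)
  rw [hS, hβ, sum_range_odd_pow_eq_sum_Icc] at key
  have hbase : k + 2 - (k + 1 + 2) / 3 ≤ 2 * (k + 1) / 3 + 1 := by omega
  exact key.trans (by gcongr)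

/-- If `G` is a finite simple connected graph of order `n ≥ 2`, `k` a positive integer,
and `γ_L^k(G) = β`, then
`n ≤ (⌊2(k+1)/3⌋ + 1)^β - 1 + β · Σ_{i=1}^{⌈(k+1)/3⌉} (2i - 1)^(β-1)`. -/
theorem stmt_11 {V : Type*} [Fintype V] (G : SimpleGraph V) (hG : G.Connected)
    (hn : 2 ≤ Fintype.card V) (k : ℕ) (hk : 1 ≤ k) (β : ℕ) (hβ : kld G k = β) :
    Fintype.card V ≤ (2 * (k + 1) / 3 + 1) ^ β - 1 +
      β * ∑ i ∈ Finset.Icc 1 ((k + 1 + 2) / 3), (2 * i - 1) ^ (β - 1) :=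
  stmt_11_general G hG k β hβ
end

section
/- Let m ≥ 2 and let G = K_{a_1,a_2,...,a_m} be the complete m-partite graph with part sizes a_1,...,a_m ≥ 1 and order n = a_1 + ... + a_m ≥ 3, and let k be a positive integer. If k = 1 and G is isomorphic to the star K_{1,n−1}, then γ_L^k(G) = n − 1 = dim_k(G) + 1; in all other cases γ_L^k(G) = dim_k(G). -/
open SimpleGraph Finset

/-!
For `k ≥ 1` the complete multipartite graph has diameter at most two, so the truncation in
`d_k` is invisible. Two distinct vertices are twins (equidistant from every other vertex) exactly
when they lie in the same part or both lie in singleton parts. A resolving set must contain all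
but at most one vertex of each twin class, while the complement of a transversal of the twin
classes resolves; hence `dim_k(G) = n - t`, where `t` is the number of twin classes. The same
complement is also dominating, unless `k = 1` and every vertex outside the transversal lies in the
part of a single transversal vertex, which forces `G` to be a star. In a star at `k = 1`, a
locating-dominating set misses at most one vertex: two missed leaves are twins, and a missed
center leaves every missed leaf undominated.
-/

lemma Finset.exists_injOn_card_eq_card_image {α β : Type*} [Fintype α] [DecidableEq β]
    (f : α → β) : ∃ E : Finset α, Set.InjOn f E ∧ #E = #(univ.image f) := by
  obtain ⟨E, -, hinj, himage⟩ := exists_subset_injOn_image_eq_of_surjOn (f := f)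
    Set.univ (univ.image f) fun l hl => by simpa using hl
  exact ⟨E, hinj, by rw [← himage, card_image_of_injOn hinj]⟩

namespace SimpleGraph

variable {V : Type*} {G : SimpleGraph V}

lemma dist_eq_two_of_adj_of_adj {u v w : V} (huv : u ≠ v) (hnadj : ¬G.Adj u v)
    (huw : G.Adj u w) (hwv : G.Adj w v) : G.dist u v = 2 := by
  have : G.edist u v = 2 :=
    edist_eq_two_iff.mpr ⟨huv, hnadj, w, G.mem_commonNeighbors.mpr ⟨huw, hwv.symm⟩⟩
  simp [dist, this]

def IsStarCenter (G : SimpleGraph V) (c : V) : Prop :=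
  ∀ x y, G.Adj x y ↔ x ≠ y ∧ (x = c ∨ y = c)

lemma isStarCenter_completeBipartiteGraph (β : Type*) :
    (completeBipartiteGraph (Fin 1) β).IsStarCenter (Sum.inl 0) := by
  rintro (x | x) (y | y) <;> simp [Fin.fin_one_eq_zero]

lemma IsStarCenter.comap {W : Type*} {H : SimpleGraph W} {c : W} (φ : G ≃g H)
    (hc : H.IsStarCenter c) : G.IsStarCenter (φ.symm c) := by
  intro x y
  rw [← φ.map_adj_iff, hc, φ.injective.ne_iff, RelIso.eq_symm_apply, RelIso.eq_symm_apply]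

lemma IsStarCenter.nonempty_iso {W : Type*} {H : SimpleGraph W} {c : V} (e : V ≃ W)
    (hG : G.IsStarCenter c) (hH : H.IsStarCenter (e c)) : Nonempty (G ≃g H) :=
  ⟨⟨e, fun {x y} => by rw [hG, hH, e.injective.ne_iff, e.injective.eq_iff, e.injective.eq_iff]⟩⟩

lemma nonempty_iso_completeBipartiteGraph_iff [Fintype V] {p : ℕ}
    (hV : Fintype.card V = p + 1) :
    Nonempty (G ≃g completeBipartiteGraph (Fin 1) (Fin p)) ↔ ∃ c, G.IsStarCenter c := by
  refine ⟨fun ⟨φ⟩ => ⟨_, (isStarCenter_completeBipartiteGraph _).comap φ⟩, fun ⟨c, hc⟩ => ?_⟩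
  classical
  obtain ⟨e₀⟩ : Nonempty (V ≃ Fin 1 ⊕ Fin p) :=
    Fintype.card_eq.mp (by simp [hV, add_comm])
  let e := e₀.trans (Equiv.swap (e₀ c) (Sum.inl 0))
  have hec : e c = Sum.inl 0 := by simp [e]
  exact hc.nonempty_iso e (hec ▸ isStarCenter_completeBipartiteGraph _)

namespace IsStarCenter

variable {c x y : V}

lemma adj_center (hc : G.IsStarCenter c) (hx : x ≠ c) : G.Adj x c :=
  (hc x c).mpr ⟨hx, Or.inr rfl⟩

lemma connected (hc : G.IsStarCenter c) : G.Connected :=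
  (connected_iff_exists_forall_reachable G).mpr ⟨c, fun x => by
    by_cases hx : x = c
    · rw [hx]
    · exact (hc.adj_center hx).symm.reachable⟩

lemma dist_center (hc : G.IsStarCenter c) (hx : x ≠ c) : G.dist x c = 1 :=
  dist_eq_one_iff_adj.mpr (hc.adj_center hx)

lemma dist_eq_two (hc : G.IsStarCenter c) (hxy : x ≠ y) (hx : x ≠ c) (hy : y ≠ c) :
    G.dist x y = 2 :=
  dist_eq_two_of_adj_of_adj hxy (by simp [hc x y, hx, hy]) (hc.adj_center hx)
    (hc.adj_center hy).symm

lemma dist_eq_dist (hc : G.IsStarCenter c) (hx : x ≠ c) (hy : y ≠ c)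
    {z : V} (hzx : z ≠ x) (hzy : z ≠ y) : G.dist x z = G.dist y z := by
  by_cases hz : z = c
  · rw [hz, hc.dist_center hx, hc.dist_center hy]
  · rw [hc.dist_eq_two hzx.symm hx hz, hc.dist_eq_two hzy.symm hy hz]

lemma center_mem_of_isKDomSet_one {S : Finset V} (hc : G.IsStarCenter c)
    (hS : IsKDomSet G 1 S) {y : V} (hy : y ≠ c) (hyS : y ∉ S) : c ∈ S := by
  obtain ⟨w, hwS, hw⟩ := hS y hyS
  have hwy : y ≠ w := fun h => hyS (h ▸ hwS)
  have hadj : G.Adj y w :=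
    dist_eq_one_iff_adj.mp (le_antisymm hw (hc.connected.pos_dist_of_ne hwy))
  obtain rfl : w = c := ((hc y w).mp hadj).2.resolve_left hy
  exact hwS

end IsStarCenter

end SimpleGraph

section Resolving

variable {V : Type*} {G : SimpleGraph V} {k : ℕ} {R : Finset V} {x y : V}

lemma isKResSet_of_forall_notMem (hG : G.Connected)
    (h : ∀ x y, x ∉ R → y ∉ R → x ≠ y →
      ∃ z ∈ R, min (G.dist x z) (k + 1) ≠ min (G.dist y z) (k + 1)) :
    IsKResSet G k R := by
  have resolved_by_self : ∀ {x y}, x ∈ R → x ≠ y →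
      ∃ z ∈ R, min (G.dist x z) (k + 1) ≠ min (G.dist y z) (k + 1) := fun {x y} hx hxy =>
    ⟨x, hx, by have := hG.pos_dist_of_ne hxy.symm; simp; omega⟩
  intro x y hxy
  by_cases hx : x ∈ R
  · exact resolved_by_self hx hxy
  by_cases hy : y ∈ R
  · obtain ⟨z, hz, hne⟩ := resolved_by_self hy hxy.symm
    exact ⟨z, hz, hne.symm⟩
  exact h x y hx hy hxy

lemma IsKResSet.mem_or_mem (hR : IsKResSet G k R) (hxy : x ≠ y)
    (htwin : ∀ z, z ≠ x → z ≠ y → G.dist x z = G.dist y z) : x ∈ R ∨ y ∈ R := by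
  by_contra! h
  obtain ⟨z, hz, hne⟩ := hR x y hxy
  exact hne (by rw [htwin z (fun e => h.1 (e ▸ hz)) (fun e => h.2 (e ▸ hz))])

lemma IsKResSet.card_compl_le [Fintype V] [DecidableEq V] {L : Type*} [DecidableEq L]
    (hR : IsKResSet G k R) (f : V → L)
    (htwin : ∀ x y, x ≠ y → f x = f y → ∀ z, z ≠ x → z ≠ y → G.dist x z = G.dist y z) :
    #Rᶜ ≤ #(univ.image f) := by
  have hinj : Set.InjOn f (Rᶜ : Finset V) := fun x hx y hy hfxy => by
    by_contra hxy
    rw [coe_compl, Set.mem_compl_iff, mem_coe] at hx hy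
    exact (hR.mem_or_mem hxy (htwin x y hxy hfxy)).elim hx hy
  calc #Rᶜ = #(Rᶜ.image f) := (card_image_of_injOn hinj).symm
    _ ≤ #(univ.image f) := card_le_card (image_subset_image (subset_univ _))

lemma kdim_eq_card (hR : IsKResSet G k R) (hmin : ∀ R', IsKResSet G k R' → #R ≤ #R') :
    kdim G k = #R :=
  IsLeast.csInf_eq ⟨⟨R, hR, rfl⟩, by rintro _ ⟨R', hR', rfl⟩; exact hmin R' hR'⟩

lemma kld_eq_card (hdom : IsKDomSet G k R) (hres : IsKResSet G k R)
    (hmin : ∀ S, IsKDomSet G k S → IsKResSet G k S → #R ≤ #S) : kld G k = #R :=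
  IsLeast.csInf_eq ⟨⟨R, hdom, hres, rfl⟩, by rintro _ ⟨S, hS, hS', rfl⟩; exact hmin S hS hS'⟩

end Resolving

namespace SimpleGraph.IsStarCenter

variable {V : Type*} [Fintype V] [DecidableEq V] {G : SimpleGraph V} {c : V} {k : ℕ}

lemma kld_one_eq (hc : G.IsStarCenter c) (hV : 2 ≤ Fintype.card V) :
    kld G 1 = Fintype.card V - 1 := by
  obtain ⟨ℓ, hℓ⟩ := Fintype.exists_ne_of_one_lt_card hV c
  rw [← card_univ, ← card_erase_of_mem (mem_univ c)]
  refine kld_eq_card ?_ ?_ fun S hdom hres => ?_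
  · intro u hu
    obtain rfl : u = c := by simpa using hu
    exact ⟨ℓ, by simp [hℓ], by rw [dist_comm, hc.dist_center hℓ]⟩
  · refine isKResSet_of_forall_notMem hc.connected fun x y hx hy hxy => ?_
    simp only [mem_erase, mem_univ, and_true, not_not] at hx hy
    exact absurd (hx.trans hy.symm) hxy
  · have hSc : #Sᶜ ≤ 1 := card_le_one.mpr fun x hx y hy => by
      rw [mem_compl] at hx hy
      by_contra hxy
      by_cases hxc : x = c
      · exact hx (hxc ▸ hc.center_mem_of_isKDomSet_one hdom (hxc ▸ Ne.symm hxy) hy)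
      by_cases hyc : y = c
      · exact hy (hyc ▸ hc.center_mem_of_isKDomSet_one hdom hxc hx)
      exact (hres.mem_or_mem hxy fun z => hc.dist_eq_dist hxc hyc).elim hx hy
    rw [card_compl] at hSc
    rw [card_erase_of_mem (mem_univ c), card_univ]
    omega

lemma kdim_eq (hc : G.IsStarCenter c) (hk : 1 ≤ k) (hV : 3 ≤ Fintype.card V) :
    kdim G k = Fintype.card V - 2 := by
  obtain ⟨ℓ, hℓ, ℓ', hℓ', hne⟩ := one_lt_card.mp (show 1 < #({c}ᶜ : Finset V) by
    rw [card_compl, card_singleton]; omega)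
  rw [mem_compl, mem_singleton] at hℓ hℓ'
  have hcard : #({c, ℓ}ᶜ : Finset V) = Fintype.card V - 2 := by
    rw [card_compl, card_pair (Ne.symm hℓ)]
  rw [← hcard]
  refine kdim_eq_card ?_ fun R hR => ?_
  · have hcℓ' : G.dist c ℓ' = 1 := by rw [dist_comm, hc.dist_center hℓ']
    have hℓℓ' : G.dist ℓ ℓ' = 2 := hc.dist_eq_two hne hℓ hℓ'
    refine isKResSet_of_forall_notMem hc.connected fun x y hx hy hxy =>
      ⟨ℓ', by simp [hℓ', hne.symm], ?_⟩
    simp only [mem_compl, mem_insert, mem_singleton, not_not] at hx hy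
    rcases hx with rfl | rfl <;> rcases hy with rfl | rfl
    all_goals first | exact absurd rfl hxy | (rw [hcℓ', hℓℓ']; omega)
  · -- leaves are pairwise twins, so `Rᶜ` contains at most one leaf
    have hRc : #Rᶜ ≤ 2 := by
      refine (hR.card_compl_le (fun v => decide (v = c)) fun x y hxy hf z => ?_).trans
        (card_le_univ _)
      simp only [decide_eq_decide] at hf
      by_cases hxc : x = c
      · exact absurd (hxc.trans (hf.mp hxc).symm) hxy
      exact hc.dist_eq_dist hxc (mt hf.mpr hxc)
    rw [card_compl] at hRc
    rw [hcard]
    omega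

end SimpleGraph.IsStarCenter

namespace SimpleGraph.completeMultipartiteGraph

variable {ι : Type*} {V : ι → Type*} {x y : Σ i, V i}

lemma dist_of_fst_ne (h : x.1 ≠ y.1) : (completeMultipartiteGraph V).dist x y = 1 :=
  dist_eq_one_iff_adj.mpr h

lemma eq_of_fst_eq [Subsingleton (V x.1)] (h : x.1 = y.1) : x = y := by
  obtain ⟨i, a⟩ := x
  obtain ⟨j, b⟩ := y
  obtain rfl : i = j := h
  rw [Subsingleton.elim a b]

variable (V) in
open Classical in
/-- Distinct vertices are twins exactly when they have the same twin class: they lie in the same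
part, or both lie in singleton parts. -/
noncomputable def twinClass (v : Σ i, V i) : Option ι :=
  if Nontrivial (V v.1) then some v.1 else none

lemma twinClass_eq_iff : twinClass V x = twinClass V y ↔
    x.1 = y.1 ∨ (Subsingleton (V x.1) ∧ Subsingleton (V y.1)) := by
  simp only [twinClass, ← not_nontrivial_iff_subsingleton]
  split_ifs with hx hy hy <;> simp_all <;> rintro h <;> simp_all

variable [Nontrivial ι] [∀ i, Nonempty (V i)] {E : Finset (Σ i, V i)}

lemma dist_of_fst_eq (hxy : x ≠ y) (h : x.1 = y.1) :
    (completeMultipartiteGraph V).dist x y = 2 := by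
  obtain ⟨j, hj⟩ := exists_ne x.1
  exact dist_eq_two_of_adj_of_adj (w := ⟨j, Classical.arbitrary _⟩) hxy (· h) hj.symm
    (show j ≠ y.1 from h ▸ hj)

lemma dist_le_two (x y : Σ i, V i) : (completeMultipartiteGraph V).dist x y ≤ 2 := by
  by_cases hxy : x = y
  · simp [hxy]
  by_cases h : x.1 = y.1
  · rw [dist_of_fst_eq hxy h]
  · rw [dist_of_fst_ne h]; omega

lemma connected : (completeMultipartiteGraph V).Connected := by
  have : Nonempty (Σ i, V i) := ⟨⟨Classical.arbitrary ι, Classical.arbitrary _⟩⟩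
  refine ⟨fun x y => ?_⟩
  by_cases hxy : x = y
  · rw [hxy]
  by_cases h : x.1 = y.1
  · exact Reachable.of_dist_ne_zero (by rw [dist_of_fst_eq hxy h]; omega)
  · exact Adj.reachable h

lemma dist_eq_dist_of_twinClass_eq (h : twinClass V x = twinClass V y) {z : Σ i, V i}
    (hzx : z ≠ x) (hzy : z ≠ y) :
    (completeMultipartiteGraph V).dist x z = (completeMultipartiteGraph V).dist y z := by
  rcases twinClass_eq_iff.mp h with hxy | ⟨hx, hy⟩
  · by_cases hz : z.1 = x.1
    · rw [dist_of_fst_eq hzx.symm hz.symm, dist_of_fst_eq hzy.symm (hxy ▸ hz).symm]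
    · rw [dist_of_fst_ne (Ne.symm hz), dist_of_fst_ne (hxy ▸ Ne.symm hz)]
  · rw [dist_of_fst_ne fun h => hzx (eq_of_fst_eq h).symm,
      dist_of_fst_ne fun h => hzy (eq_of_fst_eq h).symm]

lemma exists_notMem_dist_eq_two_dist_eq_one (hE : Set.InjOn (twinClass V) E) (hx : x ∈ E)
    (hxy : twinClass V x ≠ twinClass V y) [Nontrivial (V x.1)] :
    ∃ z ∉ E, (completeMultipartiteGraph V).dist x z = 2 ∧
      (completeMultipartiteGraph V).dist y z = 1 := by
  obtain ⟨b, hb⟩ := exists_ne x.2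
  have hzx : (⟨x.1, b⟩ : Σ i, V i) ≠ x := fun h => hb (eq_of_heq (Sigma.ext_iff.mp h).2)
  have htwin : twinClass V ⟨x.1, b⟩ = twinClass V x := twinClass_eq_iff.mpr (Or.inl rfl)
  refine ⟨⟨x.1, b⟩, fun hz => hzx (hE hz hx htwin), dist_of_fst_eq hzx.symm rfl,
    dist_of_fst_ne fun h => hxy (twinClass_eq_iff.mpr (Or.inl h.symm))⟩

lemma exists_ne_twinClass_eq : ∃ x y : Σ i, V i, x ≠ y ∧ twinClass V x = twinClass V y := by
  obtain ⟨i, j, hij⟩ := exists_pair_ne ι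
  have in_part : ∀ l, Nontrivial (V l) →
      ∃ x y : Σ i, V i, x ≠ y ∧ twinClass V x = twinClass V y := fun l _ => by
    obtain ⟨a, b, hab⟩ := exists_pair_ne (V l)
    exact ⟨⟨l, a⟩, ⟨l, b⟩, by simpa using hab, twinClass_eq_iff.mpr (Or.inl rfl)⟩
  by_cases hi : Nontrivial (V i)
  · exact in_part i hi
  by_cases hj : Nontrivial (V j)
  · exact in_part j hj
  rw [not_nontrivial_iff_subsingleton] at hi hj
  exact ⟨⟨i, Classical.arbitrary _⟩, ⟨j, Classical.arbitrary _⟩, fun h => hij (congrArg Sigma.fst h),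
    twinClass_eq_iff.mpr (Or.inr ⟨hi, hj⟩)⟩

/-- The parts other than that of `u` then contain a single vertex in total: the star center. -/
lemma exists_isStarCenter (hE : Set.InjOn (twinClass V) E) (u : Σ i, V i)
    (h : ∀ w ∉ E, w.1 = u.1) : ∃ c, (completeMultipartiteGraph V).IsStarCenter c := by
  have mem_E : ∀ x : Σ i, V i, x.1 ≠ u.1 → x ∈ E := fun x hx => by
    by_contra hxE
    exact hx (h x hxE)
  have subsingleton : ∀ x : Σ i, V i, x.1 ≠ u.1 → Subsingleton (V x.1) := by
    rintro ⟨i, a⟩ hx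
    by_contra hnt
    rw [not_subsingleton_iff_nontrivial] at hnt
    obtain ⟨b, hb⟩ := exists_ne a
    have := hE (mem_E ⟨i, b⟩ hx) (mem_E ⟨i, a⟩ hx) (twinClass_eq_iff.mpr (Or.inl rfl))
    exact hb (by simpa using this)
  have unique : ∀ x y : Σ i, V i, x.1 ≠ u.1 → y.1 ≠ u.1 → x = y := fun x y hx hy =>
    hE (mem_E x hx) (mem_E y hy)
      (twinClass_eq_iff.mpr (Or.inr ⟨subsingleton x hx, subsingleton y hy⟩))
  obtain ⟨j, hj⟩ := exists_ne u.1
  let c : Σ i, V i := ⟨j, Classical.arbitrary _⟩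
  refine ⟨c, fun x y => ⟨fun hxy => ⟨fun h => hxy (h ▸ rfl), ?_⟩, ?_⟩⟩
  · by_cases hx : x.1 = u.1
    · exact Or.inr (unique y c (fun h => hxy (hx.trans h.symm)) hj)
    · exact Or.inl (unique x c hx hj)
  · rintro ⟨hxy, rfl | rfl⟩ hfst
    · exact hxy (unique c y hj fun h => hj (hfst.trans h))
    · exact hxy (unique x c (fun h => hj (hfst.symm.trans h)) hj)

variable [Fintype ι] [DecidableEq ι] [∀ i, Fintype (V i)] [∀ i, DecidableEq (V i)] {k : ℕ}

lemma isKResSet_compl (hk : 1 ≤ k) (hE : Set.InjOn (twinClass V) E) :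
    IsKResSet (completeMultipartiteGraph V) k Eᶜ := by
  refine isKResSet_of_forall_notMem connected fun x y hx hy hxy => ?_
  rw [notMem_compl] at hx hy
  have hne : twinClass V x ≠ twinClass V y := fun h => hxy (hE hx hy h)
  by_cases hxn : Nontrivial (V x.1)
  · obtain ⟨z, hz, h2, h1⟩ := exists_notMem_dist_eq_two_dist_eq_one hE hx hne
    exact ⟨z, mem_compl.mpr hz, by rw [h2, h1]; omega⟩
  · have hyn : Nontrivial (V y.1) := by
      by_contra hyn
      rw [not_nontrivial_iff_subsingleton] at hxn hyn
      exact hne (twinClass_eq_iff.mpr (Or.inr ⟨hxn, hyn⟩))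
    obtain ⟨z, hz, h2, h1⟩ := exists_notMem_dist_eq_two_dist_eq_one hE hy hne.symm
    exact ⟨z, mem_compl.mpr hz, by rw [h2, h1]; omega⟩

lemma card_sub_le_of_isKResSet {R : Finset (Σ i, V i)}
    (hR : IsKResSet (completeMultipartiteGraph V) k R) :
    Fintype.card (Σ i, V i) - #(univ.image (twinClass V)) ≤ #R := by
  have := hR.card_compl_le (twinClass V) fun x y _ h z => dist_eq_dist_of_twinClass_eq h
  rw [card_compl] at this
  omega

lemma isKDomSet_compl (hk : 1 ≤ k) (hE : Set.InjOn (twinClass V) E)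
    (hstar : k = 1 → ¬∃ c, (completeMultipartiteGraph V).IsStarCenter c) :
    IsKDomSet (completeMultipartiteGraph V) k Eᶜ := by
  intro u _
  rcases (by omega : k = 1 ∨ 2 ≤ k) with rfl | hk2
  · by_contra! hdom
    refine hstar rfl (exists_isStarCenter hE u fun w hw => ?_)
    by_contra h
    exact (hdom w (mem_compl.mpr hw)).not_ge (dist_of_fst_ne (Ne.symm h)).le
  · obtain ⟨x, y, hxy, htwin⟩ := exists_ne_twinClass_eq (V := V)
    obtain ⟨w, hw⟩ : ∃ w, w ∉ E := by
      by_contra! h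
      exact hxy (hE (h x) (h y) htwin)
    exact ⟨w, mem_compl.mpr hw, (dist_le_two u w).trans hk2⟩

theorem kdim_eq (hk : 1 ≤ k) : kdim (completeMultipartiteGraph V) k =
    Fintype.card (Σ i, V i) - #(univ.image (twinClass V)) := by
  obtain ⟨E, hE, hcard⟩ := exists_injOn_card_eq_card_image (twinClass V)
  have hEc : #Eᶜ = Fintype.card (Σ i, V i) - #(univ.image (twinClass V)) := by
    rw [card_compl, hcard]
  rw [← hEc]
  exact kdim_eq_card (isKResSet_compl hk hE) fun R hR => hEc ▸ card_sub_le_of_isKResSet hR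

theorem kld_eq (hk : 1 ≤ k)
    (hstar : k = 1 → ¬∃ c, (completeMultipartiteGraph V).IsStarCenter c) :
    kld (completeMultipartiteGraph V) k =
      Fintype.card (Σ i, V i) - #(univ.image (twinClass V)) := by
  obtain ⟨E, hE, hcard⟩ := exists_injOn_card_eq_card_image (twinClass V)
  have hEc : #Eᶜ = Fintype.card (Σ i, V i) - #(univ.image (twinClass V)) := by
    rw [card_compl, hcard]
  rw [← hEc]
  exact kld_eq_card (isKDomSet_compl hk hE hstar) (isKResSet_compl hk hE)
    fun S _ hS => hEc ▸ card_sub_le_of_isKResSet hS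

end SimpleGraph.completeMultipartiteGraph

open Classical in
/-- For the complete `m`-partite graph `G = K_{a_1,…,a_m}` (`m ≥ 2`, all `a_i ≥ 1`,
order `n = Σ a_i ≥ 3`) and a positive integer `k`: if `k = 1` and `G` is isomorphic
to the star `K_{1,n-1}` then `γ_L^k(G) = n - 1 = dim_k(G) + 1`; otherwise
`γ_L^k(G) = dim_k(G)`. -/
theorem stmt_14 (m : ℕ) (hm : 2 ≤ m) (a : Fin m → ℕ) (ha : ∀ i, 1 ≤ a i)
    (hn : 3 ≤ ∑ i, a i) (k : ℕ) (hk : 1 ≤ k) :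
    if k = 1 ∧ Nonempty ((completeMultipartiteGraph fun i => Fin (a i)) ≃g
        completeBipartiteGraph (Fin 1) (Fin (∑ i, a i - 1))) then
      kld (completeMultipartiteGraph fun i => Fin (a i)) k = (∑ i, a i) - 1 ∧
        (∑ i, a i) - 1 = kdim (completeMultipartiteGraph fun i => Fin (a i)) k + 1
    else
      kld (completeMultipartiteGraph fun i => Fin (a i)) k =
        kdim (completeMultipartiteGraph fun i => Fin (a i)) k := by
  have : Nontrivial (Fin m) := Fin.nontrivial_iff_two_le.mpr hm
  have : ∀ i, Nonempty (Fin (a i)) := fun i => ⟨⟨0, ha i⟩⟩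
  have hcard : Fintype.card (Σ i, Fin (a i)) = ∑ i, a i := by simp
  have hiso := nonempty_iso_completeBipartiteGraph_iff
    (G := completeMultipartiteGraph fun i => Fin (a i)) (p := ∑ i, a i - 1) (by omega)
  split_ifs with h
  · obtain ⟨rfl, c, hc⟩ := h.imp_right hiso.mp
    rw [hc.kld_one_eq (by omega), hc.kdim_eq le_rfl (by omega), hcard]
    omega
  · rw [completeMultipartiteGraph.kld_eq hk fun hk1 hc => h ⟨hk1, hiso.mpr hc⟩,
      completeMultipartiteGraph.kdim_eq hk]
end

section
/- Let n ≥ 2 and let k be a positive integer, and let P_n denote the path on n vertices. If n ≡ 1 (mod 3k+2) or n ≡ k+2 (mod 3k+2), then γ_L^k(P_n) = dim_k(P_n) + 1; otherwise γ_L^k(P_n) = dim_k(P_n). -/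
/-!
Number the vertices of `P_n` as `0, …, n - 1` and call the elements of `R` landmarks. `R` is a
distance-`k` resolving set iff at most one vertex is farther than `k` from every landmark and
every landmark other than `0` and `n - 1` has another landmark within distance `k + 1`: that
partner separates the two neighbours of the landmark, and indeed every pair of vertices placed
symmetrically around it.

Shift by `k + 1` and add virtual landmarks at distance `k + 1` beyond both ends. For a dominating
resolving set, consecutive landmarks are then at most `2k + 1` apart and no two consecutive gaps
exceed `k + 1`, so the `m + 2` landmarks span at most `spanBound k (m + 1)`, which reads
`n + 1 + 2k ≤ spanBound k (m + 1)`. A resolving set that is not dominating has a unique far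
vertex; deleting it leaves a dominating resolving set of `P_(n-1)`, whence
`n + 2k ≤ spanBound k (m + 1)`. Blocks of `3k + 2` vertices with landmarks at offsets `k` and
`2k + 1` attain both bounds. So `dim_k(P_n)` and `γ_L^k(P_n)` are the least `m` satisfying these
inequalities, and they differ exactly when `n + 2k = spanBound k (m + 1)` for some `m`, that is,
when `n ≡ 1` or `n ≡ k + 2 (mod 3k + 2)`.
-/

open SimpleGraph Finset

namespace SimpleGraph

lemma pathGraph_natDist_le_length {n : ℕ} {u v : Fin n} (p : (pathGraph n).Walk u v) :
    Nat.dist u v ≤ p.length := by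
  induction p with
  | nil => simp
  | cons hadj p ih =>
    rw [pathGraph_adj] at hadj
    rw [Walk.length_cons]
    unfold Nat.dist at *
    omega

lemma pathGraph_dist_le_of_eq_add {n d : ℕ} {u v : Fin n} (h : (v : ℕ) = u + d) :
    (pathGraph n).dist u v ≤ d := by
  induction d generalizing v with
  | zero => simp [Fin.ext (h.trans (add_zero _))]
  | succ d ih =>
    let w : Fin n := ⟨u + d, by omega⟩
    have hwv : (pathGraph n).Adj w v := by
      rw [pathGraph_adj]
      simp only [w]
      omega
    calc (pathGraph n).dist u v
        ≤ (pathGraph n).dist u w + (pathGraph n).dist w v :=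
          (pathGraph_preconnected n u w).dist_triangle_left v
      _ ≤ d + 1 := add_le_add (ih rfl) (dist_eq_one_iff_adj.2 hwv).le

theorem pathGraph_dist_s15 {n : ℕ} (u v : Fin n) : (pathGraph n).dist u v = Nat.dist u v := by
  apply le_antisymm
  · rcases le_total u v with huv | hvu
    · exact pathGraph_dist_le_of_eq_add (by unfold Nat.dist; omega)
    · rw [dist_comm]
      exact pathGraph_dist_le_of_eq_add (by unfold Nat.dist; omega)
  · obtain ⟨p, hp⟩ := (pathGraph_preconnected n u v).exists_walk_length_eq_dist
    exact hp ▸ pathGraph_natDist_le_length p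

end SimpleGraph

/-- The largest possible span `max T - min T` of a set `T` of `L + 1` naturals in which
consecutive elements are at most `2k + 1` apart and no two consecutive gaps both exceed `k + 1`. -/
def spanBound (k : ℕ) : ℕ → ℕ
  | 0 => 0
  | 1 => 2 * k + 1
  | L + 2 => spanBound k L + (3 * k + 2)

lemma spanBound_lt_succ (k : ℕ) : ∀ L, spanBound k L < spanBound k (L + 1)
  | 0 => by simp [spanBound]
  | 1 => by simp [spanBound]; omega
  | L + 2 => by
    have := spanBound_lt_succ k L
    simp only [spanBound]
    omega

lemma spanBound_strictMono (k : ℕ) : StrictMono (spanBound k) :=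
  strictMono_nat_of_lt_succ (spanBound_lt_succ k)

lemma two_mul_lt_spanBound_succ (k m : ℕ) : 2 * k < spanBound k (m + 1) :=
  (Nat.lt_succ_self _).trans_le ((spanBound_strictMono k).monotone (Nat.le_add_left 1 m))

lemma spanBound_two_mul_add_one (k j : ℕ) :
    spanBound k (2 * j + 1) = j * (3 * k + 2) + (2 * k + 1) := by
  induction j with
  | zero => simp [spanBound]
  | succ j ih =>
    rw [show 2 * (j + 1) + 1 = 2 * j + 1 + 2 by ring, spanBound, ih]
    ring

lemma spanBound_two_mul_add_two (k j : ℕ) : spanBound k (2 * j + 2) = (j + 1) * (3 * k + 2) := by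
  induction j with
  | zero => simp [spanBound]
  | succ j ih =>
    rw [show 2 * (j + 1) + 2 = 2 * j + 2 + 2 by ring, spanBound, ih]
    ring

lemma exists_pred_of_card_filter_lt_pos {α : Type*} [LinearOrder α] {T : Finset α} {x : α}
    (h : 0 < #{y ∈ T | y < x}) :
    ∃ y ∈ T, y < x ∧ (∀ z ∈ T, z < x → z ≤ y) ∧
      #{z ∈ T | z < y} + 1 = #{z ∈ T | z < x} := by
  set y := ({y ∈ T | y < x}).max' (card_pos.1 h)
  have hmax := mem_filter.1 (max'_mem _ (card_pos.1 h))
  have hle : ∀ z ∈ T, z < x → z ≤ y :=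
    fun z hz hzx => le_max' _ z (mem_filter.2 ⟨hz, hzx⟩)
  refine ⟨y, hmax.1, hmax.2, hle, ?_⟩
  have : {z ∈ T | z < x} = insert y {z ∈ T | z < y} := by
    ext z
    simp only [mem_filter, mem_insert]
    constructor
    · rintro ⟨hz, hzx⟩
      exact (hle z hz hzx).eq_or_lt.imp id (⟨hz, ·⟩)
    · rintro (rfl | ⟨hz, hzy⟩)
      exacts [hmax, ⟨hz, hzy.trans hmax.2⟩]
  rw [this, card_insert_of_notMem (by simp)]

section Span

variable {k : ℕ} {T : Finset ℕ}
  (hgap : ∀ x ∈ T, (∃ z ∈ T, x < z) → ∃ z ∈ T, x < z ∧ z ≤ x + (2 * k + 1))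
  (hpair : ∀ y ∈ T, 0 < y → (∃ z ∈ T, y < z) →
    ∃ w ∈ T, w ≠ y ∧ Nat.dist y w ≤ k + 1)
include hgap

lemma le_add_of_forall_lt_le {x y : ℕ} (hx : x ∈ T) (hy : y ∈ T) (hyx : y < x)
    (hpred : ∀ z ∈ T, z < x → z ≤ y) : x ≤ y + (2 * k + 1) := by
  obtain ⟨z, hz, hyz, hzy⟩ := hgap y hy ⟨x, hx, hyx⟩
  have := not_lt.1 fun hzx => (hpred z hz hzx).not_gt hyz
  omega

include hpair

theorem le_spanBound_card_filter_lt (h0 : 0 ∈ T) :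
    ∀ c, ∀ x ∈ T, #{y ∈ T | y < x} = c → x ≤ spanBound k c
  | 0, x, hx, hc => by
    by_contra! hpos
    have : 0 ∈ {y ∈ T | y < x} := mem_filter.2 ⟨h0, by simp [spanBound] at hpos; omega⟩
    simp [card_eq_zero.1 hc] at this
  | c + 1, x, hx, hc => by
    obtain ⟨y, hy, hyx, hpred, hcy⟩ :=
      exists_pred_of_card_filter_lt_pos (T := T) (x := x) (by omega)
    have hxy := le_add_of_forall_lt_le hgap hx hy hyx hpred
    match c, hcy with
    | 0, hcy =>
      have := le_spanBound_card_filter_lt h0 0 y hy (by omega)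
      simp only [spanBound] at this ⊢
      omega
    | c + 1, hcy =>
      obtain ⟨w, hw, hwy, hwpred, hcw⟩ :=
        exists_pred_of_card_filter_lt_pos (T := T) (x := y) (by omega)
      have hyw := le_add_of_forall_lt_le hgap hy hw hwy hwpred
      have hwc := le_spanBound_card_filter_lt h0 c w hw (by omega)
      -- if the gap below `y` exceeds `k + 1`, the partner of `y` lies above `y`, so at or above `x`
      have hxw : x ≤ w + (3 * k + 2) := by
        by_cases hsmall : y ≤ w + (k + 1)
        · omega
        obtain ⟨v, hv, hvy, hyv⟩ := hpair y hy (by omega) ⟨x, hx, hyx⟩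
        unfold Nat.dist at hyv
        rcases lt_or_gt_of_ne hvy with hlt | hgt
        · have := hwpred v hv hlt
          omega
        · have := not_lt.1 fun hvx => (hpred v hv hvx).not_gt hgt
          omega
      simp only [spanBound]
      omega

end Span

def NearLandmark (k : ℕ) (R : Finset ℕ) (x : ℕ) : Prop := ∃ z ∈ R, Nat.dist x z ≤ k

def PathDominating (n k : ℕ) (R : Finset ℕ) : Prop := ∀ x < n, NearLandmark k R x

def PathResolving (n k : ℕ) (R : Finset ℕ) : Prop :=
  ∀ x < n, ∀ y < n, x ≠ y →
    ∃ z ∈ R, min (Nat.dist x z) (k + 1) ≠ min (Nat.dist y z) (k + 1)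

def HasPartners (n k : ℕ) (R : Finset ℕ) : Prop :=
  ∀ y ∈ R, y = 0 ∨ y + 1 = n ∨ ∃ w ∈ R, w ≠ y ∧ Nat.dist y w ≤ k + 1

/-- Coordinates shifted by `k + 1`, with virtual landmarks at distance `k + 1` beyond both ends
of the path. -/
def extendedLandmarks (n k : ℕ) (R : Finset ℕ) : Finset ℕ :=
  insert (n + 2 * k + 1) (insert 0 (R.image (· + (k + 1))))

def deleteVertex (v z : ℕ) : ℕ := if z < v then z else z - 1

section PathLandmarks

variable {n k : ℕ} {R : Finset ℕ}

theorem pathResolving_iff (hR : R ⊆ range n) :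
    PathResolving n k R ↔
      HasPartners n k R ∧ {x | x < n ∧ ¬NearLandmark k R x}.Subsingleton := by
  constructor
  · intro hres
    refine ⟨fun y hy => ?_, fun x ⟨hx, hxfar⟩ y ⟨hy, hyfar⟩ => ?_⟩
    · have hyn := mem_range.1 (hR hy)
      by_contra! hend
      obtain ⟨z, hz, hne⟩ := hres (y - 1) (by omega) (y + 1) (by omega) (by omega)
      have := hend.2.2 z hz
      unfold Nat.dist at *
      omega
    · by_contra hxy
      obtain ⟨z, hz, hne⟩ := hres x hx y hy hxy
      simp only [NearLandmark, not_exists, not_and, not_le] at hxfar hyfar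
      have := hxfar z hz
      have := hyfar z hz
      omega
  · rintro ⟨hpart, hfar⟩ x hx y hy hxy
    wlog hxnear : NearLandmark k R x generalizing x y
    · by_cases hynear : NearLandmark k R y
      · obtain ⟨z, hz, hne⟩ := this y hy x hx hxy.symm hynear
        exact ⟨z, hz, hne.symm⟩
      · exact absurd (hfar ⟨hx, hxnear⟩ ⟨hy, hynear⟩) hxy
    obtain ⟨z, hz, hxz⟩ := hxnear
    by_cases hsep : min (Nat.dist x z) (k + 1) ≠ min (Nat.dist y z) (k + 1)
    · exact ⟨z, hz, hsep⟩
    -- `x` and `y` are mirror images about `z`, so `z` is an inner vertex and its partner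
    -- separates them
    have hinner : z ≠ 0 ∧ z + 1 ≠ n := by
      unfold Nat.dist at *
      omega
    obtain ⟨w, hw, hwz, hzw⟩ := (hpart z hz).resolve_left hinner.1 |>.resolve_left hinner.2
    refine ⟨w, hw, ?_⟩
    unfold Nat.dist at *
    omega

lemma mem_extendedLandmarks {x : ℕ} :
    x ∈ extendedLandmarks n k R ↔
      x = n + 2 * k + 1 ∨ x = 0 ∨ ∃ r ∈ R, r + (k + 1) = x := by
  simp [extendedLandmarks]

lemma le_of_mem_extendedLandmarks (hR : R ⊆ range n) {x : ℕ}
    (hx : x ∈ extendedLandmarks n k R) : x ≤ n + 2 * k + 1 := by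
  rcases mem_extendedLandmarks.1 hx with rfl | rfl | ⟨r, hr, rfl⟩
  · rfl
  · omega
  · have := mem_range.1 (hR hr)
    omega

lemma exists_gap_extendedLandmarks (hR : R ⊆ range n) (hdom : PathDominating n k R) :
    ∀ x ∈ extendedLandmarks n k R, (∃ z ∈ extendedLandmarks n k R, x < z) →
      ∃ z ∈ extendedLandmarks n k R, x < z ∧ z ≤ x + (2 * k + 1) := by
  rintro x hx ⟨z, hz, hxz⟩
  have := le_of_mem_extendedLandmarks hR hz
  have hxn : x ≤ n + k := by
    rcases mem_extendedLandmarks.1 hx with rfl | rfl | ⟨r, hr, rfl⟩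
    · omega
    · omega
    · have := mem_range.1 (hR hr)
      omega
  by_cases hxlt : x < n
  · obtain ⟨r, hr, hxr⟩ := hdom x hxlt
    refine ⟨r + (k + 1), mem_extendedLandmarks.2 (.inr (.inr ⟨r, hr, rfl⟩)), ?_⟩
    unfold Nat.dist at hxr
    omega
  · exact ⟨n + 2 * k + 1, mem_extendedLandmarks.2 (.inl rfl), by omega, by omega⟩

lemma exists_partner_extendedLandmarks (hR : R ⊆ range n) (hpart : HasPartners n k R) :
    ∀ y ∈ extendedLandmarks n k R, 0 < y → (∃ z ∈ extendedLandmarks n k R, y < z) →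
      ∃ w ∈ extendedLandmarks n k R, w ≠ y ∧ Nat.dist y w ≤ k + 1 := by
  rintro y hy hy0 ⟨z, hz, hyz⟩
  have := le_of_mem_extendedLandmarks hR hz
  obtain ⟨r, hr, rfl⟩ : ∃ r ∈ R, r + (k + 1) = y := by
    rcases mem_extendedLandmarks.1 hy with rfl | rfl | h
    exacts [by omega, by omega, h]
  rcases hpart r hr with rfl | hend | ⟨w, hw, hwr, hrw⟩
  · exact ⟨0, mem_extendedLandmarks.2 (.inr (.inl rfl)), by omega, by unfold Nat.dist; omega⟩
  · exact ⟨_, mem_extendedLandmarks.2 (.inl rfl), by omega, by unfold Nat.dist; omega⟩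
  · refine ⟨w + (k + 1), mem_extendedLandmarks.2 (.inr (.inr ⟨w, hw, rfl⟩)), by omega, ?_⟩
    unfold Nat.dist at *
    omega

lemma card_filter_lt_extendedLandmarks (hR : R ⊆ range n) :
    #{y ∈ extendedLandmarks n k R | y < n + 2 * k + 1} = #R + 1 := by
  rw [extendedLandmarks, filter_insert, if_neg (lt_irrefl _), filter_true_of_mem,
    card_insert_of_notMem (by simp), card_image_of_injective _ (add_left_injective _)]
  intro y hy
  rcases mem_insert.1 hy with rfl | hy
  · omega
  · obtain ⟨r, hr, rfl⟩ := mem_image.1 hy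
    have := mem_range.1 (hR hr)
    omega

theorem add_one_add_two_mul_le_spanBound (hR : R ⊆ range n) (hpart : HasPartners n k R)
    (hdom : PathDominating n k R) : n + 1 + 2 * k ≤ spanBound k (#R + 1) := by
  have := le_spanBound_card_filter_lt (exists_gap_extendedLandmarks hR hdom)
    (exists_partner_extendedLandmarks hR hpart) (mem_extendedLandmarks.2 (.inr (.inl rfl))) _ _
    (mem_extendedLandmarks.2 (.inl rfl)) (card_filter_lt_extendedLandmarks hR)
  omega

lemma injOn_deleteVertex {v : ℕ} (hvfar : ∀ z ∈ R, k < Nat.dist v z) :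
    Set.InjOn (deleteVertex v) R := fun a ha b hb hab => by
  have := hvfar a ha
  have := hvfar b hb
  unfold deleteVertex Nat.dist at *
  split_ifs at hab <;> omega

-- A landmark within `k + 1` of another, or within `k` of a vertex, never lies across `v`.
lemma hasPartners_image_deleteVertex {v : ℕ} (hv : v < n + 1) (hpart : HasPartners (n + 1) k R)
    (hvfar : ∀ z ∈ R, k < Nat.dist v z) : HasPartners n k (R.image (deleteVertex v)) := by
  intro y' hy'
  obtain ⟨y, hy, rfl⟩ := mem_image.1 hy'
  have hyv := hvfar y hy
  unfold Nat.dist at hyv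
  rcases hpart y hy with rfl | hend | ⟨w, hw, hwy, hyw⟩
  · exact .inl (by unfold deleteVertex; split_ifs <;> omega)
  · exact .inr (.inl (by unfold deleteVertex; split_ifs <;> omega))
  · refine .inr (.inr ⟨_, mem_image_of_mem _ hw,
      fun h => hwy (injOn_deleteVertex hvfar hw hy h), ?_⟩)
    have hwv := hvfar w hw
    unfold deleteVertex Nat.dist at *
    split_ifs <;> omega

lemma pathDominating_image_deleteVertex {v : ℕ} (hv : v < n + 1)
    (hvfar : ∀ z ∈ R, k < Nat.dist v z)
    (hfar : {x | x < n + 1 ∧ ¬NearLandmark k R x}.Subsingleton) :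
    PathDominating n k (R.image (deleteVertex v)) := by
  intro x' hx'
  set x := if x' < v then x' else x' + 1
  have hxv : x ≠ v := by
    simp only [x]
    split_ifs <;> omega
  have hvfar' : ¬NearLandmark k R v := by simpa [NearLandmark] using hvfar
  obtain ⟨z, hz, hxz⟩ : NearLandmark k R x := by
    by_contra hxfar
    exact hxv (hfar ⟨by simp only [x]; split_ifs <;> omega, hxfar⟩ ⟨hv, hvfar'⟩)
  refine ⟨deleteVertex v z, mem_image_of_mem _ hz, ?_⟩
  have hzv := hvfar z hz
  simp only [deleteVertex, x] at *
  unfold Nat.dist at *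
  split_ifs at * <;> omega

theorem add_two_mul_le_spanBound (hR : R ⊆ range n) (hpart : HasPartners n k R)
    (hfar : {x | x < n ∧ ¬NearLandmark k R x}.Subsingleton) :
    n + 2 * k ≤ spanBound k (#R + 1) := by
  by_cases hdom : PathDominating n k R
  · have := add_one_add_two_mul_le_spanBound hR hpart hdom
    omega
  obtain ⟨v, hv, hvfar⟩ : ∃ v < n, ∀ z ∈ R, k < Nat.dist v z := by
    simpa [PathDominating, NearLandmark] using hdom
  obtain ⟨n, rfl⟩ : ∃ n', n = n' + 1 := ⟨n - 1, by omega⟩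
  have hR' : R.image (deleteVertex v) ⊆ range n := fun z hz => by
    obtain ⟨r, hr, rfl⟩ := mem_image.1 hz
    have := mem_range.1 (hR hr)
    have := hvfar r hr
    simp only [mem_range, deleteVertex]
    unfold Nat.dist at *
    split_ifs <;> omega
  have := add_one_add_two_mul_le_spanBound hR' (hasPartners_image_deleteVertex hv hpart hvfar)
    (pathDominating_image_deleteVertex hv hvfar hfar)
  rw [card_image_of_injOn (injOn_deleteVertex hvfar)] at this
  omega

lemma exists_landmarks_add_block (hR : R ⊆ range n) (hpart : HasPartners n k R)
    (hdom : ∀ x, x + 1 < n → NearLandmark k R x) :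
    ∃ R' ⊆ range (n + (3 * k + 2)), #R' ≤ #R + 2 ∧ HasPartners (n + (3 * k + 2)) k R' ∧
      ∀ x, x + 1 < n + (3 * k + 2) → NearLandmark k R' x := by
  set R' := insert k (insert (2 * k + 1) (R.image (· + (3 * k + 2))))
  have hmem : ∀ x, x ∈ R' ↔ x = k ∨ x = 2 * k + 1 ∨ ∃ r ∈ R, r + (3 * k + 2) = x := by
    simp [R']
  have hRn : ∀ r ∈ R, r < n := fun r hr => mem_range.1 (hR hr)
  refine ⟨R', fun x hx => ?_, ?_, fun y hy => ?_, fun x hx => ?_⟩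
  · rcases (hmem x).1 hx with rfl | rfl | ⟨r, hr, rfl⟩
    all_goals have := hRn; grind
  · calc #R' ≤ #(R.image (· + (3 * k + 2))) + 2 :=
          (card_insert_le _ _).trans (Nat.add_le_add_right (card_insert_le _ _) 1)
      _ ≤ #R + 2 := Nat.add_le_add_right card_image_le 2
  · have hk : k ∈ R' := (hmem _).2 (.inl rfl)
    have hk' : 2 * k + 1 ∈ R' := (hmem _).2 (.inr (.inl rfl))
    rcases (hmem y).1 hy with hy | hy | ⟨r, hr, rfl⟩
    · exact .inr (.inr ⟨_, hk', by omega, by unfold Nat.dist; omega⟩)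
    · exact .inr (.inr ⟨_, hk, by omega, by unfold Nat.dist; omega⟩)
    rcases hpart r hr with rfl | hend | ⟨w, hw, hwr, hrw⟩
    · exact .inr (.inr ⟨_, hk', by omega, by unfold Nat.dist; omega⟩)
    · exact .inr (.inl (by omega))
    · refine .inr (.inr ⟨w + (3 * k + 2), (hmem _).2 (.inr (.inr ⟨w, hw, rfl⟩)),
        by omega, ?_⟩)
      unfold Nat.dist at *
      omega
  · by_cases hx1 : x ≤ 2 * k
    · exact ⟨k, (hmem _).2 (.inl rfl), by unfold Nat.dist; omega⟩
    by_cases hx2 : x < 3 * k + 2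
    · exact ⟨2 * k + 1, (hmem _).2 (.inr (.inl rfl)), by unfold Nat.dist; omega⟩
    obtain ⟨r, hr, hxr⟩ := hdom (x - (3 * k + 2)) (by omega)
    refine ⟨r + (3 * k + 2), (hmem _).2 (.inr (.inr ⟨r, hr, rfl⟩)), ?_⟩
    unfold Nat.dist at *
    omega

lemma exists_landmarks_of_eq_spanBound :
    ∀ m n, n + 2 * k = spanBound k (m + 1) →
      ∃ R ⊆ range n, #R ≤ m ∧ HasPartners n k R ∧ ∀ x, x + 1 < n → NearLandmark k R x
  | 0, n, h => ⟨∅, by simp, by simp, by simp [HasPartners], fun x hx => by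
      simp [spanBound] at h; omega⟩
  | 1, n, h => ⟨{0}, by simp [spanBound] at h; simp; omega, by simp, by simp [HasPartners],
      fun x hx => ⟨0, by simp, by simp [spanBound] at h; unfold Nat.dist; omega⟩⟩
  | m + 2, n, h => by
    have h' : n + 2 * k = spanBound k (m + 1) + (3 * k + 2) := h
    have hpos := two_mul_lt_spanBound_succ k m
    obtain ⟨R, hR, hcard, hpart, hdom⟩ :=
      exists_landmarks_of_eq_spanBound m (n - (3 * k + 2)) (by omega)
    obtain ⟨R', hR', hcard', hpart', hdom'⟩ := exists_landmarks_add_block hR hpart hdom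
    rw [show n - (3 * k + 2) + (3 * k + 2) = n by omega] at hR' hpart' hdom'
    exact ⟨R', hR', by omega, hpart', hdom'⟩

lemma exists_landmarks_of_le {N : ℕ} (hnN : n ≤ N) (hR : R ⊆ range N)
    (hpart : HasPartners N k R) (hdom : ∀ x, x + 1 < N → NearLandmark k R x) :
    ∃ R' ⊆ range n, #R' ≤ #R ∧ HasPartners n k R' ∧
      ∀ x < n, x + 1 < N → NearLandmark k R' x := by
  rcases Nat.eq_zero_or_pos n with rfl | hn
  · exact ⟨∅, by simp, by simp, by simp [HasPartners], by simp⟩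
  set f : ℕ → ℕ := fun z => min z (n - 1)
  refine ⟨R.image f, fun z hz => ?_, card_image_le, fun y' hy' => ?_, fun x hx hxN => ?_⟩
  · obtain ⟨r, -, rfl⟩ := mem_image.1 hz
    simp only [mem_range, f]
    omega
  · obtain ⟨y, hy, rfl⟩ := mem_image.1 hy'
    by_cases hyn : y < n - 1
    · have hyN := mem_range.1 (hR hy)
      rcases hpart y hy with rfl | hend | ⟨w, hw, hwy, hyw⟩
      · exact .inl (by simp [f])
      · omega
      · refine .inr (.inr ⟨f w, mem_image_of_mem f hw, ?_, ?_⟩)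
        all_goals simp only [f]; unfold Nat.dist at *; omega
    · exact .inr (.inl (by simp only [f]; omega))
  · obtain ⟨z, hz, hxz⟩ := hdom x hxN
    refine ⟨f z, mem_image_of_mem f hz, ?_⟩
    simp only [f]
    unfold Nat.dist at *
    omega

theorem exists_landmarks {m : ℕ} (h : n + 2 * k ≤ spanBound k (m + 1)) :
    ∃ R ⊆ range n, #R ≤ m ∧ HasPartners n k R ∧
      {x | x < n ∧ ¬NearLandmark k R x}.Subsingleton ∧
      (n + 1 + 2 * k ≤ spanBound k (m + 1) → PathDominating n k R) := by
  have hpos := two_mul_lt_spanBound_succ k m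
  obtain ⟨R₀, hR₀, hcard₀, hpart₀, hdom₀⟩ :=
    exists_landmarks_of_eq_spanBound (k := k) m (spanBound k (m + 1) - 2 * k) (by omega)
  obtain ⟨R, hR, hcard, hpart, hdom⟩ :=
    exists_landmarks_of_le (n := n) (by omega) hR₀ hpart₀ hdom₀
  refine ⟨R, hR, hcard.trans hcard₀, hpart, fun x ⟨hx, hxfar⟩ y ⟨hy, hyfar⟩ => ?_,
    fun hlt x hx => hdom x hx (by omega)⟩
  have := mt (hdom x hx) hxfar
  have := mt (hdom y hy) hyfar
  omega

end PathLandmarks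

lemma exists_add_two_mul_le_spanBound (k n : ℕ) : ∃ m, n + 2 * k ≤ spanBound k (m + 1) :=
  ⟨n + 2 * k, (Nat.le_succ _).trans (spanBound_strictMono k).le_apply⟩

noncomputable def minLandmarks (k n : ℕ) : ℕ := Nat.find (exists_add_two_mul_le_spanBound k n)

section MinLandmarks

variable {k n m : ℕ}

lemma minLandmarks_eq_iff :
    minLandmarks k n = m ↔
      n + 2 * k ≤ spanBound k (m + 1) ∧ ∀ i < m, spanBound k (i + 1) < n + 2 * k := by
  simp only [minLandmarks, Nat.find_eq_iff, not_le]

lemma minLandmarks_le (h : n + 2 * k ≤ spanBound k (m + 1)) : minLandmarks k n ≤ m :=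
  Nat.find_min' _ h

lemma minLandmarks_succ_of_exists (h : ∃ m, n + 2 * k = spanBound k (m + 1)) :
    minLandmarks k (n + 1) = minLandmarks k n + 1 := by
  obtain ⟨j, hj⟩ := h
  have hn : minLandmarks k n = j :=
    minLandmarks_eq_iff.2 ⟨hj.le, fun i hi => hj ▸ spanBound_strictMono k (by omega)⟩
  rw [hn, minLandmarks_eq_iff]
  refine ⟨?_, fun i hi => ?_⟩
  · have := spanBound_lt_succ k (j + 1)
    omega
  · have := (spanBound_strictMono k).monotone (show i + 1 ≤ j + 1 by omega)
    omega

lemma minLandmarks_succ_of_not_exists (h : ¬∃ m, n + 2 * k = spanBound k (m + 1)) :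
    minLandmarks k (n + 1) = minLandmarks k n := by
  obtain ⟨hle, hmin⟩ := minLandmarks_eq_iff.1 (rfl : minLandmarks k n = _)
  have hlt := hle.lt_of_ne fun heq => h ⟨_, heq⟩
  exact minLandmarks_eq_iff.2 ⟨by omega, fun i hi => by have := hmin i hi; omega⟩

lemma exists_add_two_mul_eq_spanBound_iff (hk : 1 ≤ k) :
    (∃ m, n + 2 * k = spanBound k (m + 1)) ↔
      n % (3 * k + 2) = 1 % (3 * k + 2) ∨ n % (3 * k + 2) = (k + 2) % (3 * k + 2) := by
  rw [Nat.mod_eq_of_lt (show 1 < 3 * k + 2 by omega),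
    Nat.mod_eq_of_lt (show k + 2 < 3 * k + 2 by omega)]
  have hdiv := Nat.mod_add_div' n (3 * k + 2)
  constructor
  · rintro ⟨m, hm⟩
    obtain ⟨j, rfl | rfl⟩ := Nat.even_or_odd' m
    · rw [spanBound_two_mul_add_one] at hm
      left
      rw [show n = 1 + j * (3 * k + 2) by omega, Nat.add_mul_mod_self_right]
      exact Nat.mod_eq_of_lt (by omega)
    · rw [spanBound_two_mul_add_two, add_one_mul] at hm
      right
      rw [show n = (k + 2) + j * (3 * k + 2) by omega, Nat.add_mul_mod_self_right]
      exact Nat.mod_eq_of_lt (by omega)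
  · rintro (h | h)
    · exact ⟨2 * (n / (3 * k + 2)), by rw [spanBound_two_mul_add_one]; omega⟩
    · exact ⟨2 * (n / (3 * k + 2)) + 1, by rw [spanBound_two_mul_add_two, add_one_mul]; omega⟩

end MinLandmarks

lemma isKResSet_pathGraph_iff {n k : ℕ} (S : Finset (Fin n)) :
    IsKResSet (pathGraph n) k S ↔ PathResolving n k (S.image Fin.val) := by
  simp [IsKResSet, PathResolving, pathGraph_dist_s15, Fin.forall_iff, Fin.ext_iff]

lemma isKDomSet_pathGraph_iff {n k : ℕ} (S : Finset (Fin n)) :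
    IsKDomSet (pathGraph n) k S ↔ PathDominating n k (S.image Fin.val) := by
  simp only [IsKDomSet, PathDominating, NearLandmark, pathGraph_dist_s15, Fin.forall_iff,
    exists_mem_image]
  refine ⟨fun h x hx => ?_, fun h x hx _ => h x hx⟩
  by_cases hxS : ⟨x, hx⟩ ∈ S
  · exact ⟨_, hxS, by simp⟩
  · exact h x hx hxS

lemma sInf_card_eq_minLandmarks {n k t : ℕ} {P : Finset (Fin n) → Prop}
    {Q : Finset ℕ → Prop}
    (hPQ : ∀ S, P S ↔ Q (S.image Fin.val))
    (hlow : ∀ R ⊆ range n, Q R → t + 2 * k ≤ spanBound k (#R + 1))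
    (hup : ∃ R ⊆ range n, Q R ∧ #R ≤ minLandmarks k t) :
    sInf {m | ∃ S, P S ∧ #S = m} = minLandmarks k t := by
  obtain ⟨R, hR, hQ, hcard⟩ := hup
  have hRn : ∀ r ∈ R, r < n := fun r hr => mem_range.1 (hR hr)
  have hmem : #R ∈ {m | ∃ S, P S ∧ #S = m} :=
    ⟨R.attachFin hRn, (hPQ _).2 (by rwa [image_val_attachFin]), card_attachFin _ _⟩
  refine (Nat.sInf_le hmem).trans hcard |>.antisymm ?_
  obtain ⟨S, hS, hSc⟩ := Nat.sInf_mem ⟨_, hmem⟩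
  rw [← hSc, ← card_image_of_injective S Fin.val_injective]
  refine minLandmarks_le (hlow _ (fun x hx => ?_) ((hPQ S).1 hS))
  obtain ⟨i, -, rfl⟩ := mem_image.1 hx
  simp

theorem kdim_pathGraph (n k : ℕ) : kdim (pathGraph n) k = minLandmarks k n := by
  obtain ⟨R, hR, hcard, hpart, hfar, -⟩ := exists_landmarks (minLandmarks_eq_iff.1 rfl).1
  refine sInf_card_eq_minLandmarks isKResSet_pathGraph_iff (fun R hR hres => ?_)
    ⟨R, hR, (pathResolving_iff hR).2 ⟨hpart, hfar⟩, hcard⟩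
  obtain ⟨hpart, hfar⟩ := (pathResolving_iff hR).1 hres
  exact add_two_mul_le_spanBound hR hpart hfar

theorem kld_pathGraph (n k : ℕ) : kld (pathGraph n) k = minLandmarks k (n + 1) := by
  have hspec := (minLandmarks_eq_iff.1 (rfl : minLandmarks k (n + 1) = _)).1
  obtain ⟨R, hR, hcard, hpart, hfar, hdom⟩ :=
    exists_landmarks (k := k) (n := n) (m := minLandmarks k (n + 1)) (by omega)
  simp only [kld, ← and_assoc]
  refine sInf_card_eq_minLandmarks (Q := fun R => PathDominating n k R ∧ PathResolving n k R)
    (fun S => and_congr (isKDomSet_pathGraph_iff S) (isKResSet_pathGraph_iff S))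
    (fun R hR hQ => add_one_add_two_mul_le_spanBound hR ((pathResolving_iff hR).1 hQ.2).1 hQ.1)
    ⟨R, hR, ⟨hdom hspec, (pathResolving_iff hR).2 ⟨hpart, hfar⟩⟩, hcard⟩

theorem stmt_15_general (n : ℕ) (k : ℕ) (hk : 1 ≤ k) :
    if n % (3 * k + 2) = 1 % (3 * k + 2) ∨ n % (3 * k + 2) = (k + 2) % (3 * k + 2) then
      kld (pathGraph n) k = kdim (pathGraph n) k + 1
    else
      kld (pathGraph n) k = kdim (pathGraph n) k := by
  rw [kld_pathGraph, kdim_pathGraph]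
  split_ifs with h
  · exact minLandmarks_succ_of_exists ((exists_add_two_mul_eq_spanBound_iff hk).2 h)
  · exact minLandmarks_succ_of_not_exists (mt (exists_add_two_mul_eq_spanBound_iff hk).1 h)

/-- For the path `P_n` (`n ≥ 2`) and a positive integer `k`: if `n ≡ 1` or
`n ≡ k + 2 (mod 3k+2)` then `γ_L^k(P_n) = dim_k(P_n) + 1`; otherwise
`γ_L^k(P_n) = dim_k(P_n)`. -/
theorem stmt_15 (n : ℕ) (hn : 2 ≤ n) (k : ℕ) (hk : 1 ≤ k) :
    if n % (3 * k + 2) = 1 % (3 * k + 2) ∨ n % (3 * k + 2) = (k + 2) % (3 * k + 2) then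
      kld (pathGraph n) k = kdim (pathGraph n) k + 1
    else
      kld (pathGraph n) k = kdim (pathGraph n) k :=
  stmt_15_general n k hk
end
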